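/- With Z as above, for γ ∈ ℂ and R ∈ so(N,J): Z(γ+1,J;τ,N,o_N)(R) = ε(J,N)·Z(γ,J;τ,N,o_N)(R) and Z(γ+τ,J;τ,N,o_N)(R) = ε(J,N)·Z(γ,J;τ,N,o_N)(R), where ε(J,N) = (-1)^{Σ_{a∈Δ⁺}a}. -/

import Mathlib

/- STATEMENT 13: Z(γ+1,J;τ,N,o_N)(R) = ε(J,N)·Z(γ,J;τ,N,o_N)(R) and
Z(γ+τ,J;τ,N,o_N)(R) = ε(J,N)·Z(γ,J;τ,N,o_N)(R), with ε(J,N) = (-1)^{Σ_{a∈Δ⁺}a}.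
Z is expressed in the diagonal model (rotation numbers a_j of J, R acting by 2iπr_j), where
Z(γ,J;τ,N,o_N)(R) = Tr(e^{γJ}e^R,W_{1,q}(N⊗ℂ))/Str(e^{γJ}e^R,S_N,o_N) is `Zdiag` below. -/

open Complex Real

noncomputable section

def qhex (τ : ℂ) : ℂ := Complex.exp ((π : ℂ) * I * τ)

def qex (τ : ℂ) : ℂ := Complex.exp (2 * (π : ℂ) * I * τ)

def phiNumF (τ z : ℂ) (n : ℕ) : ℂ :=
  (1 + qhex τ ^ (2 * n + 1) * Complex.exp (2 * (π : ℂ) * I * z)) *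
    (1 + qhex τ ^ (2 * n + 1) * Complex.exp (-(2 * (π : ℂ) * I * z)))

def phiDenF (τ z : ℂ) (n : ℕ) : ℂ :=
  (1 - qex τ ^ (n + 1) * Complex.exp (2 * (π : ℂ) * I * z)) *
    (1 - qex τ ^ (n + 1) * Complex.exp (-(2 * (π : ℂ) * I * z)))

def Phi1 (τ z : ℂ) : ℂ :=
  (Complex.exp (-((π : ℂ) * I * z)) - Complex.exp ((π : ℂ) * I * z))⁻¹ *
    ((∏' n : ℕ, phiNumF τ z n) / (∏' n : ℕ, phiDenF τ z n))

def Zstr {m : ℕ} (ν : ℂ) (a : Fin m → ℤ) (r : Fin m → ℂ) (γ : ℂ) : ℂ :=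
  ν * ∏ j, (Complex.exp (-((π : ℂ) * I * ((a j : ℂ) * γ + r j))) -
      Complex.exp ((π : ℂ) * I * ((a j : ℂ) * γ + r j)))

/-- Z(γ,J;τ,N,o_N)(R) in the diagonal model:
Tr(e^{γJ}e^R,W_{1,q}(N⊗ℂ)) / Str(e^{γJ}e^R,S_N,o_N), with the trace on W_{1,q}(N⊗ℂ)
computed from the eigenvalues e^{±2iπ(a_jγ+r_j)} of e^{γJ}e^R. -/
def Zdiag (τ : ℂ) {m : ℕ} (ν : ℂ) (a : Fin m → ℤ) (r : Fin m → ℂ) (γ : ℂ) : ℂ :=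
  (∏ j, ∏' n : ℕ, phiNumF τ ((a j : ℂ) * γ + r j) n) /
    ((∏ j, ∏' n : ℕ, phiDenF τ ((a j : ℂ) * γ + r j) n) * Zstr ν a r γ)

/-!
Write `q = e^{iπτ}` and `v = e^{iπz}`. Then `Phi1 τ z` is `(v⁻¹ - v)⁻¹` times a quotient of four
q-Pochhammer symbols in `q²` with arguments `∓q v^{±2}`, `q² v^{±2}`. The shift `z ↦ z + 1` is
`v ↦ -v`, which fixes the products and negates the prefactor. The shift `z ↦ z + τ` is `v ↦ q v`,
which moves each symbol by one step, `(a; Q)_∞ = (1 - a) (a Q; Q)_∞`; the four boundary factors so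
produced, together with the change of the prefactor, multiply to `-1`. Since `Zdiag` is `ν⁻¹` times
the product of the `Phi1 τ (a_j γ + r_j)`, each factor contributes a sign `(-1)^{a_j}`.
-/

open Function

def qPochhammer (a q : ℂ) : ℂ := ∏' n : ℕ, (1 - a * q ^ n)

lemma multipliable_one_sub_mul_pow (a : ℂ) {q : ℂ} (hq : ‖q‖ < 1) :
    Multipliable fun n : ℕ ↦ 1 - a * q ^ n := by
  simp_rw [sub_eq_add_neg]
  refine multipliable_one_add_of_summable ?_
  simpa [norm_mul, norm_pow] using
    (summable_geometric_of_lt_one (norm_nonneg q) hq).mul_left ‖a‖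

lemma qPochhammer_eq_mul (a : ℂ) {q : ℂ} (hq : ‖q‖ < 1) :
    qPochhammer a q = (1 - a) * qPochhammer (a * q) q := by
  have hshift (n : ℕ) : 1 - a * q ^ (n + 1) = 1 - a * q * q ^ n := by ring
  unfold qPochhammer
  rw [tprod_eq_zero_mul' (by simpa only [hshift] using multipliable_one_sub_mul_pow (a * q) hq)]
  simp only [hshift, pow_zero, mul_one]

lemma tprod_eq_qPochhammer_mul_qPochhammer (a b : ℂ) {q : ℂ} (hq : ‖q‖ < 1) :
    ∏' n : ℕ, (1 - a * q ^ n) * (1 - b * q ^ n) = qPochhammer a q * qPochhammer b q :=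
  (multipliable_one_sub_mul_pow a hq).tprod_mul (multipliable_one_sub_mul_pow b hq)

/-- `Phi1 τ z` in the multiplicative variables `q = e^{iπτ}` and `v = e^{iπz}`. -/
def phiProd (q v : ℂ) : ℂ :=
  (v⁻¹ - v)⁻¹ * (qPochhammer (-(q * v ^ 2)) (q ^ 2) * qPochhammer (-(q * (v ^ 2)⁻¹)) (q ^ 2) /
    (qPochhammer (q ^ 2 * v ^ 2) (q ^ 2) * qPochhammer (q ^ 2 * (v ^ 2)⁻¹) (q ^ 2)))

lemma phiProd_mul_self {q : ℂ} (hq : ‖q‖ < 1) (hq₀ : q ≠ 0) {v : ℂ} (hv : v ≠ 0) :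
    phiProd q (q * v) = -phiProd q v := by
  have hq2 : ‖q ^ 2‖ < 1 := by rw [norm_pow]; exact pow_lt_one₀ (norm_nonneg q) hq two_ne_zero
  have num₁ : qPochhammer (-(q * v ^ 2)) (q ^ 2)
      = (1 + q * v ^ 2) * qPochhammer (-(q * (q * v) ^ 2)) (q ^ 2) := by
    rw [qPochhammer_eq_mul _ hq2]; ring_nf
  have num₂ : qPochhammer (-(q * ((q * v) ^ 2)⁻¹)) (q ^ 2)
      = (1 + q * ((q * v) ^ 2)⁻¹) * qPochhammer (-(q * (v ^ 2)⁻¹)) (q ^ 2) := by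
    rw [qPochhammer_eq_mul _ hq2, show -(q * ((q * v) ^ 2)⁻¹) * q ^ 2 = -(q * (v ^ 2)⁻¹) by
      field_simp]
    ring
  have den₁ : qPochhammer (q ^ 2 * v ^ 2) (q ^ 2)
      = (1 - q ^ 2 * v ^ 2) * qPochhammer (q ^ 2 * (q * v) ^ 2) (q ^ 2) := by
    rw [qPochhammer_eq_mul _ hq2]; ring_nf
  have den₂ : qPochhammer (q ^ 2 * ((q * v) ^ 2)⁻¹) (q ^ 2)
      = (1 - q ^ 2 * ((q * v) ^ 2)⁻¹) * qPochhammer (q ^ 2 * (v ^ 2)⁻¹) (q ^ 2) := by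
    rw [qPochhammer_eq_mul _ hq2, show q ^ 2 * ((q * v) ^ 2)⁻¹ * q ^ 2 = q ^ 2 * (v ^ 2)⁻¹ by
      field_simp]
  have h₁ : (q * v)⁻¹ - q * v = (1 - q ^ 2 * v ^ 2) * (q * v)⁻¹ := by field_simp
  have h₂ : 1 + q * ((q * v) ^ 2)⁻¹ = (1 + q * v ^ 2) * (q * v ^ 2)⁻¹ := by field_simp; ring
  have h₃ : 1 - q ^ 2 * ((q * v) ^ 2)⁻¹ = -(v⁻¹ - v) * v⁻¹ := by field_simp; ring
  rw [phiProd, phiProd, num₁, num₂, den₁, den₂, h₁, h₂, h₃]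
  generalize qPochhammer (-(q * (q * v) ^ 2)) (q ^ 2) = A
  generalize qPochhammer (-(q * (v ^ 2)⁻¹)) (q ^ 2) = B
  generalize qPochhammer (q ^ 2 * (q * v) ^ 2) (q ^ 2) = C
  generalize qPochhammer (q ^ 2 * (v ^ 2)⁻¹) (q ^ 2) = D
  simp only [div_eq_mul_inv, mul_inv, inv_inv, inv_neg]
  field_simp

lemma qex_eq_sq (τ : ℂ) : qex τ = qhex τ ^ 2 := by
  rw [qex, qhex, ← Complex.exp_nat_mul]
  ring_nf

lemma norm_qhex_lt_one {τ : ℂ} (hτ : 0 < τ.im) : ‖qhex τ‖ < 1 := by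
  rw [qhex, Complex.norm_exp, Real.exp_lt_one_iff]
  simpa [Complex.mul_re] using mul_pos pi_pos hτ

lemma Phi1_eq_phiProd {τ : ℂ} (hτ : 0 < τ.im) (z : ℂ) :
    Phi1 τ z = phiProd (qhex τ) (Complex.exp (π * I * z)) := by
  have hsq : Complex.exp (2 * π * I * z) = Complex.exp (π * I * z) ^ 2 := by
    rw [← Complex.exp_nat_mul]; ring_nf
  simp only [Phi1, phiNumF, phiDenF, qex_eq_sq, Complex.exp_neg, hsq]
  set q := qhex τ
  set v := Complex.exp (π * I * z)
  have hq2 : ‖q ^ 2‖ < 1 := by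
    rw [norm_pow]; exact pow_lt_one₀ (norm_nonneg _) (norm_qhex_lt_one hτ) two_ne_zero
  have hnum (n : ℕ) : (1 + q ^ (2 * n + 1) * v ^ 2) * (1 + q ^ (2 * n + 1) * (v ^ 2)⁻¹)
      = (1 - -(q * v ^ 2) * (q ^ 2) ^ n) * (1 - -(q * (v ^ 2)⁻¹) * (q ^ 2) ^ n) := by ring
  have hden (n : ℕ) : (1 - (q ^ 2) ^ (n + 1) * v ^ 2) * (1 - (q ^ 2) ^ (n + 1) * (v ^ 2)⁻¹)
      = (1 - q ^ 2 * v ^ 2 * (q ^ 2) ^ n) * (1 - q ^ 2 * (v ^ 2)⁻¹ * (q ^ 2) ^ n) := by ring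
  rw [tprod_congr hnum, tprod_congr hden, tprod_eq_qPochhammer_mul_qPochhammer _ _ hq2,
    tprod_eq_qPochhammer_mul_qPochhammer _ _ hq2, phiProd]

lemma Phi1_antiperiodic_one (τ : ℂ) : Antiperiodic (Phi1 τ) 1 := by
  intro z
  have hsq : Complex.exp (2 * π * I * (z + 1)) = Complex.exp (2 * π * I * z) := by
    rw [mul_add, mul_one, Complex.exp_add, Complex.exp_two_pi_mul_I, mul_one]
  have hroot : Complex.exp (π * I * (z + 1)) = -Complex.exp (π * I * z) := by
    rw [mul_add, mul_one, Complex.exp_add, Complex.exp_pi_mul_I, mul_neg_one]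
  have hnum : phiNumF τ (z + 1) = phiNumF τ z := by
    funext n; rw [phiNumF, phiNumF, Complex.exp_neg, Complex.exp_neg, hsq]
  have hden : phiDenF τ (z + 1) = phiDenF τ z := by
    funext n; rw [phiDenF, phiDenF, Complex.exp_neg, Complex.exp_neg, hsq]
  rw [Phi1, Phi1, hnum, hden, Complex.exp_neg, Complex.exp_neg, hroot, inv_neg, neg_sub_neg,
    ← neg_sub, inv_neg, neg_mul]

lemma Phi1_antiperiodic_tau {τ : ℂ} (hτ : 0 < τ.im) : Antiperiodic (Phi1 τ) τ := by
  intro z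
  have hshift : Complex.exp (π * I * (z + τ)) = qhex τ * Complex.exp (π * I * z) := by
    rw [mul_add, Complex.exp_add, qhex, mul_comm]
  rw [Phi1_eq_phiProd hτ, Phi1_eq_phiProd hτ, hshift,
    phiProd_mul_self (norm_qhex_lt_one hτ) (Complex.exp_ne_zero _) (Complex.exp_ne_zero _)]

lemma prod_zpow_eq_zpow_sum₀ {ι G : Type*} [CommGroupWithZero G] {g : G} (hg : g ≠ 0)
    (s : Finset ι) (a : ι → ℤ) : ∏ j ∈ s, g ^ a j = g ^ ∑ j ∈ s, a j := by
  classical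
  induction s using Finset.induction with
  | empty => simp
  | insert j s hj ih => rw [Finset.prod_insert hj, Finset.sum_insert hj, ih, zpow_add₀ hg]

lemma Function.Antiperiodic.prod_int_mul_add_eq {ι α β : Type*} [Fintype ι] [CommRing α]
    [Field β] {f : α → β} {c : α} (hf : Antiperiodic f c) (a : ι → ℤ) (r : ι → α) (x : α) :
    ∏ j, f (a j * (x + c) + r j) = (-1) ^ (∑ j, a j) * ∏ j, f (a j * x + r j) := by
  have hfactor (j : ι) : f (a j * (x + c) + r j) = (-1) ^ a j * f (a j * x + r j) := by
    rw [show a j * (x + c) + r j = a j * x + r j + a j * c by ring, hf.add_int_mul_eq,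
      Int.cast_negOnePow]
  simp only [hfactor, Finset.prod_mul_distrib,
    prod_zpow_eq_zpow_sum₀ (by norm_num : (-1 : β) ≠ 0)]

lemma Zdiag_eq_prod_Phi1 (τ : ℂ) {m : ℕ} (ν : ℂ) (a : Fin m → ℤ) (r : Fin m → ℂ) (γ : ℂ) :
    Zdiag τ ν a r γ = ν⁻¹ * ∏ j, Phi1 τ (a j * γ + r j) := by
  simp only [Zdiag, Zstr, Phi1, Finset.prod_mul_distrib, Finset.prod_div_distrib,
    Finset.prod_inv_distrib]
  ring

theorem Zdiag_periodic_general (τ : ℂ) (hτ : 0 < τ.im) {m : ℕ} (ν : ℂ)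
    (a : Fin m → ℤ) (r : Fin m → ℂ) (γ : ℂ) :
    Zdiag τ ν a r (γ + 1) = (-1 : ℂ) ^ (∑ j, a j) * Zdiag τ ν a r γ ∧
    Zdiag τ ν a r (γ + τ) = (-1 : ℂ) ^ (∑ j, a j) * Zdiag τ ν a r γ := by
  simp only [Zdiag_eq_prod_Phi1, (Phi1_antiperiodic_one τ).prod_int_mul_add_eq,
    (Phi1_antiperiodic_tau hτ).prod_int_mul_add_eq, mul_left_comm ν⁻¹, and_self]

theorem Zdiag_periodic (τ : ℂ) (hτ : 0 < τ.im) {m : ℕ} (ν : ℂ) (hν : ν = 1 ∨ ν = -1)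
    (a : Fin m → ℤ) (r : Fin m → ℂ) (γ : ℂ)
    (hpre : ∀ j, Complex.exp (-((π : ℂ) * I * ((a j : ℂ) * γ + r j))) -
      Complex.exp ((π : ℂ) * I * ((a j : ℂ) * γ + r j)) ≠ 0)
    (hpre' : ∀ j, Complex.exp (-((π : ℂ) * I * ((a j : ℂ) * (γ + τ) + r j))) -
      Complex.exp ((π : ℂ) * I * ((a j : ℂ) * (γ + τ) + r j)) ≠ 0)
    (hden : ∀ j n, phiDenF τ ((a j : ℂ) * γ + r j) n ≠ 0)
    (hden' : ∀ j n, phiDenF τ ((a j : ℂ) * (γ + τ) + r j) n ≠ 0)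
    (hnum : ∀ j n, phiNumF τ ((a j : ℂ) * γ + r j) n ≠ 0)
    (hnum' : ∀ j n, phiNumF τ ((a j : ℂ) * (γ + τ) + r j) n ≠ 0) :
    Zdiag τ ν a r (γ + 1) = (-1 : ℂ) ^ (∑ j, a j) * Zdiag τ ν a r γ ∧
    Zdiag τ ν a r (γ + τ) = (-1 : ℂ) ^ (∑ j, a j) * Zdiag τ ν a r γ :=
  Zdiag_periodic_general τ hτ ν a r γ

end
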